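/- Let m ≥ 1 and let c := (1+(−1)^m)/2 (so c = 1 if m is even, c = 0 if m is odd). Let T be the quotient of the polynomial ring ℤ[ξ,ζ,h,φ] by the ideal generated by ξζ−1, h^m − 2φ, and φ² − c·h^m·φ (this models ℤ[ξ,ξ⁻¹][h,φ]/𝒞_{2m−1}, the integral cohomology of the complex quadric of dimension 2m−1 with ξ inverted). Let Φ : A → T be the ring homomorphism determined by ε ↦ 0, τ ↦ ξ², σ ↦ ζ², h ↦ h, x ↦ 0. Then the kernel of Φ equals ⟨ε⟩ + J, where J ⊆ A is the ideal generated by τ^m·x − 𝐟_(m−1), 𝐟_m, h·x, and h^(2m). (The Claim in the proof of Theorem 5.4: ker(φ∘Ψ_n) = ⟨ε⟩ + J_n, case n = 2m−1.) -/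

import Mathlib

/-! Since `σ = τ⁻¹` and every `𝐟_k` is a multiple of `ε`, the generator `τ^m x - 𝐟_(m-1)` of `J`
puts `x` into `⟨ε⟩ + J`, so `⟨ε⟩ + J = K := (ε, x, h^(2m))`. In `T`,
`h^(2m) = 4φ² = 4c·h^m φ = 2c·h^(2m)`, so `h^(2m) = 0` and `K ⊆ ker Φ`.

Conversely, `A ⧸ K ≅ ℤ[T,T⁻¹][X] ⧸ (X^(2m))` via `τ ↦ T`, `h ↦ X` (the inverse exists because `τ`
is a unit). Composing `Φ` with `T → ℚ[T,T⁻¹][X] ⧸ (X^(2m))`, `ξ ↦ T`, `h ↦ X`, `φ ↦ X^m / 2`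
gives this isomorphism followed by the map induced by `ℤ ↪ ℚ`, `T ↦ T²`, which is injective. -/

/- Context: `A = ℤ[ε,τ,σ,h,x]/(2ε, τσ-1)` models `𝒜[h,x]` where
`𝒜 = ℤ[ε,τ,τ⁻¹]/(2ε)`, and for `m ≥ 0`,
`𝐟_m = ∑_{a+2b=m} C(a+b,b)·ε^(2a+1)·τ^b·h^(2b) ∈ A`. -/

noncomputable section

open MvPolynomial

abbrev Apre : Type := MvPolynomial (Fin 5) ℤ  -- ε, τ, σ, h, x

def AI : Ideal Apre := Ideal.span {2 * X 0, X 1 * X 2 - 1}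

abbrev A : Type := Apre ⧸ AI

def ε : A := Ideal.Quotient.mk AI (X 0)
def τ : A := Ideal.Quotient.mk AI (X 1)
def σ : A := Ideal.Quotient.mk AI (X 2)
def h : A := Ideal.Quotient.mk AI (X 3)
def x : A := Ideal.Quotient.mk AI (X 4)

def f (m : ℕ) : A :=
  ∑ b ∈ Finset.range (m / 2 + 1),
    (Nat.choose (m - b) b : A) * ε ^ (2 * (m - 2 * b) + 1) * τ ^ b * h ^ (2 * b)

/- `T = ℤ[ξ,ζ,h,φ]/(ξζ-1, h^m - 2φ, φ² - c·h^m·φ)` with `c = 1` if `m` even,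
`c = 0` if `m` odd; variables `ξ = X 0`, `ζ = X 1`, `h = X 2`, `φ = X 3`. -/

abbrev Tpre : Type := MvPolynomial (Fin 4) ℤ

def TI (m : ℕ) : Ideal Tpre :=
  Ideal.span {X 0 * X 1 - 1, X 2 ^ m - 2 * X 3,
    X 3 ^ 2 - C (if Even m then (1 : ℤ) else 0) * X 2 ^ m * X 3}

abbrev T (m : ℕ) : Type := Tpre ⧸ TI m

def ξT (m : ℕ) : T m := Ideal.Quotient.mk (TI m) (X 0)
def ζT (m : ℕ) : T m := Ideal.Quotient.mk (TI m) (X 1)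
def hT (m : ℕ) : T m := Ideal.Quotient.mk (TI m) (X 2)
def φT (m : ℕ) : T m := Ideal.Quotient.mk (TI m) (X 3)

open scoped LaurentPolynomial

abbrev TruncPoly (R : Type*) [CommRing R] (n : ℕ) : Type _ :=
  Polynomial R ⧸ Ideal.span {(Polynomial.X : Polynomial R) ^ n}

namespace TruncPoly

variable {R S : Type*} [CommRing R] [CommRing S]

variable (R) in
lemma X_pow_eq_zero (n : ℕ) :
    (Ideal.Quotient.mk _ Polynomial.X : TruncPoly R n) ^ n = 0 := by
  rw [← map_pow, Ideal.Quotient.eq_zero_iff_mem]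
  exact Ideal.mem_span_singleton_self _

def map (f : R →+* S) (n : ℕ) : TruncPoly R n →+* TruncPoly S n :=
  Ideal.quotientMap _ (Polynomial.mapRingHom f) (Ideal.span_le.mpr (by simp))

lemma map_mk (f : R →+* S) (n : ℕ) (p : Polynomial R) :
    map f n (Ideal.Quotient.mk _ p) = Ideal.Quotient.mk _ (p.map f) := rfl

lemma map_injective {f : R →+* S} (hf : Function.Injective f) (n : ℕ) :
    Function.Injective (map f n) := by
  refine Ideal.quotientMap_injective' fun p hp => ?_
  simp only [Ideal.mem_comap, Ideal.mem_span_singleton, Polynomial.coe_mapRingHom,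
    Polynomial.X_pow_dvd_iff, Polynomial.coeff_map] at hp ⊢
  exact fun d hd => hf (by rw [hp d hd, map_zero])

end TruncPoly

namespace LaurentPolynomial

variable {R S : Type*} [CommRing R] [CommRing S]

def mapExpand (f : R →+* S) (k : ℤ) : R[T;T⁻¹] →+* S[T;T⁻¹] :=
  (AddMonoidAlgebra.mapDomainRingHom S (AddMonoidHom.mulLeft k)).comp
    (AddMonoidAlgebra.mapRingHom ℤ f)

lemma mapExpand_T (f : R →+* S) (k n : ℤ) : mapExpand f k (T n) = T (k * n) := by
  simp only [T, mapExpand, RingHom.comp_apply, AddMonoidAlgebra.mapRingHom_single,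
    AddMonoidAlgebra.mapDomainRingHom_apply, AddMonoidAlgebra.mapDomain_single, map_one]
  rfl

lemma mapExpand_injective {f : R →+* S} (hf : Function.Injective f) {k : ℤ} (hk : k ≠ 0) :
    Function.Injective (mapExpand f k) :=
  (AddMonoidAlgebra.mapDomain_injective (mul_right_injective₀ hk)).comp
    (AddMonoidAlgebra.map_injective (f : R →+ S) hf)

end LaurentPolynomial

lemma tau_mul_sigma : τ * σ = 1 := by
  rw [τ, σ, ← map_mul, ← map_one (Ideal.Quotient.mk AI), Ideal.Quotient.eq, AI]
  exact Ideal.subset_span (by simp)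

lemma A.ringHom_ext {S : Type*} [CommRing S] {φ ψ : A →+* S} (hε : φ ε = ψ ε) (hτ : φ τ = ψ τ)
    (hh : φ h = ψ h) (hx : φ x = ψ x) : φ = ψ := by
  have hσ : φ σ = ψ σ := by
    have hφ : φ τ * φ σ = 1 := by rw [← map_mul, tau_mul_sigma, map_one]
    have hψ : ψ τ * ψ σ = 1 := by rw [← map_mul, tau_mul_sigma, map_one]
    calc φ σ = φ σ * (ψ τ * ψ σ) := by rw [hψ, mul_one]
      _ = ψ σ * (φ τ * φ σ) := by rw [hτ]; ring
      _ = ψ σ := by rw [hφ, mul_one]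
  refine Ideal.Quotient.ringHom_ext (MvPolynomial.ringHom_ext (fun _ => ?_) fun i => ?_)
  · exact RingHom.congr_fun (RingHom.ext_int ((φ.comp _).comp C) ((ψ.comp _).comp C)) _
  · fin_cases i
    exacts [hε, hτ, hσ, hh, hx]

def A.lift {S : Type*} [CommRing S] (e t s y z : S) (he : 2 * e = 0) (hts : t * s = 1) :
    A →+* S :=
  Ideal.Quotient.lift AI (MvPolynomial.eval₂Hom (Int.castRingHom S) ![e, t, s, y, z])
    fun _ ha => RingHom.mem_ker.mp <| (Ideal.span_le (I := RingHom.ker _)).mpr (by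
      rintro _ (rfl | rfl) <;> simp [he, hts]) ha

section

variable {S : Type*} [CommRing S] (e t s y z : S) (he : 2 * e = 0) (hts : t * s = 1)

@[simp] lemma A.lift_ε : A.lift e t s y z he hts ε = e := by simp [A.lift, ε]
@[simp] lemma A.lift_τ : A.lift e t s y z he hts τ = t := by simp [A.lift, τ]
@[simp] lemma A.lift_h : A.lift e t s y z he hts h = y := by simp [A.lift, h]
@[simp] lemma A.lift_x : A.lift e t s y z he hts x = z := by simp [A.lift, x]

end

def K (m : ℕ) : Ideal A := Ideal.span {ε, x, h ^ (2 * m)}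

lemma eps_mem_K (m : ℕ) : ε ∈ K m := Ideal.subset_span (by simp)
lemma x_mem_K (m : ℕ) : x ∈ K m := Ideal.subset_span (by simp)
lemma h_pow_mem_K (m : ℕ) : h ^ (2 * m) ∈ K m := Ideal.subset_span (by simp)

lemma f_mem_span_eps (k : ℕ) : f k ∈ Ideal.span {ε} :=
  Ideal.sum_mem _ fun b _ => Ideal.mem_span_singleton.mpr
    ⟨(Nat.choose (k - b) b : A) * ε ^ (2 * (k - 2 * b)) * τ ^ b * h ^ (2 * b), by ring⟩

lemma span_eps_add_J_eq_K (m : ℕ) :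
    Ideal.span {ε} + Ideal.span {τ ^ m * x - f (m - 1), f m, h * x, h ^ (2 * m)} = K m := by
  set J := Ideal.span {τ ^ m * x - f (m - 1), f m, h * x, h ^ (2 * m)}
  have hεK : Ideal.span {ε} ≤ K m := Ideal.span_le.mpr (by simpa using eps_mem_K m)
  refine le_antisymm (sup_le hεK (Ideal.span_le.mpr ?_)) (Ideal.span_le.mpr ?_)
  · rintro _ (rfl | rfl | rfl | rfl)
    · exact sub_mem (Ideal.mul_mem_left _ _ (x_mem_K m)) (hεK (f_mem_span_eps _))
    · exact hεK (f_mem_span_eps _)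
    · exact Ideal.mul_mem_left _ _ (x_mem_K m)
    · exact h_pow_mem_K m
  · rintro _ (rfl | rfl | rfl)
    · exact Ideal.mem_sup_left (Ideal.mem_span_singleton_self _)
    · have hστ : (σ * τ) ^ m = 1 := by rw [mul_comm, tau_mul_sigma, one_pow]
      have hx : σ ^ m * (τ ^ m * x - f (m - 1)) + σ ^ m * f (m - 1) = x := by
        linear_combination x * hστ
      rw [SetLike.mem_coe, ← hx]
      exact add_mem (Ideal.mem_sup_right (Ideal.mul_mem_left _ _ (Ideal.subset_span (by simp))))
        (Ideal.mem_sup_left (Ideal.mul_mem_left _ _ (f_mem_span_eps _)))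
    · exact Ideal.mem_sup_right (Ideal.subset_span (by simp))

lemma hT_pow_eq_two_mul_φT (m : ℕ) : hT m ^ m = 2 * φT m := by
  rw [hT, φT, ← map_pow, ← map_ofNat (Ideal.Quotient.mk _), ← map_mul, Ideal.Quotient.eq]
  exact Ideal.subset_span (by simp)

lemma φT_sq_of_even {m : ℕ} (hm : Even m) : φT m ^ 2 = hT m ^ m * φT m := by
  rw [hT, φT, ← map_pow, ← map_pow, ← map_mul, Ideal.Quotient.eq]
  exact Ideal.subset_span (by simp [hm])

lemma φT_sq_of_not_even {m : ℕ} (hm : ¬Even m) : φT m ^ 2 = 0 := by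
  rw [φT, ← map_pow, Ideal.Quotient.eq_zero_iff_mem]
  exact Ideal.subset_span (by simp [hm])

lemma hT_pow_two_mul_eq_zero (m : ℕ) : hT m ^ (2 * m) = 0 := by
  by_cases hm : Even m
  · linear_combination (hT m ^ m - 2 * φT m) * hT_pow_eq_two_mul_φT m - 4 * φT_sq_of_even hm
  · linear_combination (hT m ^ m + 2 * φT m) * hT_pow_eq_two_mul_φT m + 4 * φT_sq_of_not_even hm

def T.lift {S : Type*} [CommRing S] (m : ℕ) (a b y p : S) (hab : a * b = 1) (hy : y ^ m = 2 * p)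
    (hp : p ^ 2 = if Even m then y ^ m * p else 0) : T m →+* S :=
  Ideal.Quotient.lift (TI m) (MvPolynomial.eval₂Hom (Int.castRingHom S) ![a, b, y, p])
    fun _ hq => RingHom.mem_ker.mp <| (Ideal.span_le (I := RingHom.ker _)).mpr (by
      split_ifs at hp with hm <;> simp [Set.insert_subset_iff, hm, hab, hy, hp]) hq

section

variable {S : Type*} [CommRing S] (m : ℕ) (a b y p : S) (hab : a * b = 1) (hy : y ^ m = 2 * p)
  (hp : p ^ 2 = if Even m then y ^ m * p else 0)

@[simp] lemma T.lift_ξT : T.lift m a b y p hab hy hp (ξT m) = a := by simp [T.lift, ξT]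
@[simp] lemma T.lift_hT : T.lift m a b y p hab hy hp (hT m) = y := by simp [T.lift, hT]

end

open LaurentPolynomial in
def A.toTrunc (m : ℕ) : A →+* TruncPoly ℤ[T;T⁻¹] (2 * m) :=
  A.lift 0 (Ideal.Quotient.mk _ (Polynomial.C (T 1))) (Ideal.Quotient.mk _ (Polynomial.C (T (-1))))
    (Ideal.Quotient.mk _ Polynomial.X) 0 (mul_zero _)
    (by rw [← map_mul, ← Polynomial.C_mul, ← T_add, add_neg_cancel, T_zero, map_one, map_one])

def tauUnit (m : ℕ) : (A ⧸ K m)ˣ :=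
  ⟨Ideal.Quotient.mk _ τ, Ideal.Quotient.mk _ σ, by rw [← map_mul, tau_mul_sigma, map_one],
    by rw [← map_mul, mul_comm, tau_mul_sigma, map_one]⟩

def A.ofTrunc (m : ℕ) : TruncPoly ℤ[T;T⁻¹] (2 * m) →+* A ⧸ K m :=
  Ideal.Quotient.lift _
    (Polynomial.eval₂RingHom (LaurentPolynomial.eval₂ (Int.castRingHom (A ⧸ K m)) (tauUnit m))
      (Ideal.Quotient.mk _ h)) fun _ hp => RingHom.mem_ker.mp <|
    (Ideal.span_le (I := RingHom.ker _)).mpr (by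
      simp [← map_pow, Ideal.Quotient.eq_zero_iff_mem.mpr (h_pow_mem_K m)]) hp

lemma A.ofTrunc_comp_toTrunc (m : ℕ) :
    (A.ofTrunc m).comp (A.toTrunc m) = Ideal.Quotient.mk _ := by
  refine A.ringHom_ext (S := A ⧸ K m) ?_ ?_ ?_ ?_ <;>
    simp [A.toTrunc, A.ofTrunc, tauUnit, Ideal.Quotient.eq_zero_iff_mem.mpr, eps_mem_K, x_mem_K]

lemma A.ker_toTrunc_le (m : ℕ) : RingHom.ker (A.toTrunc m) ≤ K m := fun a ha => by
  have := RingHom.congr_fun (A.ofTrunc_comp_toTrunc m) a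
  rw [RingHom.comp_apply, RingHom.mem_ker.mp ha, map_zero] at this
  exact Ideal.Quotient.eq_zero_iff_mem.mp this.symm

open LaurentPolynomial in
def T.toTrunc (m : ℕ) : T m →+* TruncPoly ℚ[T;T⁻¹] (2 * m) :=
  let X : TruncPoly ℚ[T;T⁻¹] (2 * m) := Ideal.Quotient.mk _ Polynomial.X
  let half : TruncPoly ℚ[T;T⁻¹] (2 * m) := Ideal.Quotient.mk _ (Polynomial.C (C (1 / 2)))
  have two_mul_half : 2 * half = 1 := by
    rw [← map_ofNat (Ideal.Quotient.mk _), ← map_mul, ← map_ofNat Polynomial.C, ← map_mul,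
      ← map_ofNat LaurentPolynomial.C, ← map_mul]
    norm_num
  T.lift m (Ideal.Quotient.mk _ (Polynomial.C (T 1))) (Ideal.Quotient.mk _ (Polynomial.C (T (-1))))
    X (half * X ^ m)
    (by rw [← map_mul, ← Polynomial.C_mul, ← T_add, add_neg_cancel, T_zero, map_one, map_one])
    (by linear_combination (-X ^ m) * two_mul_half)
    (by
      have hX := TruncPoly.X_pow_eq_zero ℚ[T;T⁻¹] (2 * m)
      split_ifs
      · linear_combination (half ^ 2 - half) * hX
      · linear_combination half ^ 2 * hX)

open LaurentPolynomial in
lemma T.toTrunc_comp_eq_map_comp_toTrunc (m : ℕ) (Φ : A →+* T m) (hΦε : Φ ε = 0)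
    (hΦτ : Φ τ = ξT m ^ 2) (hΦh : Φ h = hT m) (hΦx : Φ x = 0) :
    (T.toTrunc m).comp Φ =
      (TruncPoly.map (mapExpand (Int.castRingHom ℚ) 2) (2 * m)).comp (A.toTrunc m) := by
  refine A.ringHom_ext ?_ ?_ ?_ ?_
  · simp [hΦε, A.toTrunc]
  · simp only [RingHom.comp_apply, hΦτ, map_pow, T.toTrunc, T.lift_ξT, A.toTrunc, A.lift_τ,
      TruncPoly.map_mk, Polynomial.map_C, mapExpand_T]
    rw [← map_pow, ← Polynomial.C_pow, T_pow]
    norm_num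
  · simp [hΦh, A.toTrunc, T.toTrunc, TruncPoly.map_mk]
  · simp [hΦx, A.toTrunc]

theorem ker_eq_eps_plus_J_odd_general (m : ℕ)
    (Φ : A →+* T m)
    (hΦε : Φ ε = 0) (hΦτ : Φ τ = ξT m ^ 2)
    (hΦh : Φ h = hT m) (hΦx : Φ x = 0) :
    RingHom.ker Φ =
      Ideal.span {ε} + Ideal.span {τ ^ m * x - f (m - 1), f m, h * x, h ^ (2 * m)} := by
  rw [span_eps_add_J_eq_K]
  refine le_antisymm (fun a ha => A.ker_toTrunc_le m ?_) (Ideal.span_le.mpr ?_)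
  · apply TruncPoly.map_injective (LaurentPolynomial.mapExpand_injective
      (RingHom.injective_int (Int.castRingHom ℚ)) two_ne_zero)
    rw [← RingHom.comp_apply, ← T.toTrunc_comp_eq_map_comp_toTrunc m Φ hΦε hΦτ hΦh hΦx,
      RingHom.comp_apply, RingHom.mem_ker.mp ha, map_zero, map_zero]
  · rintro _ (rfl | rfl | rfl)
    · exact hΦε
    · exact hΦx
    · rw [SetLike.mem_coe, RingHom.mem_ker, map_pow, hΦh, hT_pow_two_mul_eq_zero]

theorem ker_eq_eps_plus_J_odd (m : ℕ) (hm : 1 ≤ m)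
    (Φ : A →+* T m)
    (hΦε : Φ ε = 0) (hΦτ : Φ τ = ξT m ^ 2) (hΦσ : Φ σ = ζT m ^ 2)
    (hΦh : Φ h = hT m) (hΦx : Φ x = 0) :
    RingHom.ker Φ =
      Ideal.span {ε} + Ideal.span {τ ^ m * x - f (m - 1), f m, h * x, h ^ (2 * m)} :=
  ker_eq_eps_plus_J_odd_general m Φ hΦε hΦτ hΦh hΦx
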